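/- Let p>0, p≠1, and let δ, T, D_p be as in the context, with a sequence of polynomials (φ_n) satisfying the stated conditions. Then for every integer n≥2, D_p φ_n = (D_p φ_n)(0) + [n]_p·φ_{n−1} (equality of polynomials, where (D_p φ_n)(0) denotes the constant term of D_p φ_n). -/

import Mathlib

open Polynomial

noncomputable section

/-- the p-number `[n]_p = (1-p^n)/(1-p)` -/
def pnum (p : ℝ) (n : ℕ) : ℂ := (1 - (p : ℂ) ^ n) / (1 - (p : ℂ))

/-- the p-factorial `[n]_p!` -/
def pfact (p : ℝ) (n : ℕ) : ℂ := ∏ j ∈ Finset.range n, pnum p (j + 1)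

/-- the p-binomial coefficient -/
def pbinom (p : ℝ) (n k : ℕ) : ℂ := pfact p n / (pfact p k * pfact p (n - k))

/-- `D` is the p-difference operator, the linear operator with `D X^n = [n]_p X^{n-1}` -/
def IsDp (p : ℝ) (D : Module.End ℂ (Polynomial ℂ)) : Prop :=
  ∀ n : ℕ, D (X ^ n) = Polynomial.C (pnum p n) * X ^ (n - 1)

/-- `T` is the linear operator with `T X^n = Σ_{k≤n} C_p(n,k) δ_k X^{n-k}` -/
def IsTp (p : ℝ) (δ : ℕ → ℂ) (T : Module.End ℂ (Polynomial ℂ)) : Prop :=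
  ∀ n : ℕ, T (X ^ n) =
    ∑ k ∈ Finset.range (n + 1), Polynomial.C (pbinom p n k * δ k) * X ^ (n - k)

/-- `φ` is a sequence of polynomials with `deg φ_n = n`, `φ_0 = 1`, `φ_n(0) = 0` and
`Tφ_n − φ_n = [n]_p X^{n-1}` for `n ≥ 1` -/
def IsPhi (p : ℝ) (T : Module.End ℂ (Polynomial ℂ)) (φ : ℕ → Polynomial ℂ) : Prop :=
  φ 0 = 1 ∧
  (∀ n : ℕ, 1 ≤ n → (φ n).natDegree = n ∧ (φ n).eval 0 = 0) ∧
  ∀ n : ℕ, 1 ≤ n → T (φ n) - φ n = Polynomial.C (pnum p n) * X ^ (n - 1)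

/-! `D_p` commutes with `T` because `[n-k]_p C_p(n,k) = [n]_p C_p(n-1,k)`. Hence
`g := D_p φ_n - (D_p φ_n)(0) - [n]_p φ_{n-1}` satisfies `Tg - g = D_p(Tφ_n - φ_n) -
[n]_p (Tφ_{n-1} - φ_{n-1}) = 0` and `g(0) = 0`. Since `T - 1` maps `c X^d + (lower terms)` to
`[d]_p δ_1 c X^{d-1} + (lower terms)` and `δ_1 ≠ 0` (read off from `Tφ_1 - φ_1 = 1`), the only
fixed point of `T` vanishing at `0` is `0`, so `g = 0`. -/

lemma linearMap_apply_C_mul (L : Module.End ℂ ℂ[X]) (a : ℂ) (f : ℂ[X]) :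
    L (C a * f) = C a * L f := by
  rw [← smul_eq_C_mul, map_smul, smul_eq_C_mul]

section PNumbers

variable {p : ℝ}

lemma pnum_zero (p : ℝ) : pnum p 0 = 0 := by simp [pnum]

lemma pnum_ne_zero (hp0 : 0 < p) (hp1 : p ≠ 1) {n : ℕ} (hn : n ≠ 0) : pnum p n ≠ 0 := by
  have hpn : (p : ℂ) ^ n ≠ 1 := by
    exact_mod_cast (pow_eq_one_iff_of_nonneg hp0.le hn).not.mpr hp1
  have hp : (p : ℂ) ≠ 1 := by exact_mod_cast hp1
  exact div_ne_zero (sub_ne_zero.mpr hpn.symm) (sub_ne_zero.mpr hp.symm)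

lemma pfact_succ (p : ℝ) (n : ℕ) : pfact p (n + 1) = pfact p n * pnum p (n + 1) :=
  Finset.prod_range_succ _ _

lemma pfact_ne_zero (hp0 : 0 < p) (hp1 : p ≠ 1) (n : ℕ) : pfact p n ≠ 0 :=
  Finset.prod_ne_zero_iff.mpr fun j _ => pnum_ne_zero hp0 hp1 j.succ_ne_zero

lemma pbinom_ne_zero (hp0 : 0 < p) (hp1 : p ≠ 1) (n k : ℕ) : pbinom p n k ≠ 0 :=
  div_ne_zero (pfact_ne_zero hp0 hp1 n)
    (mul_ne_zero (pfact_ne_zero hp0 hp1 k) (pfact_ne_zero hp0 hp1 (n - k)))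

lemma pbinom_zero_right (hp0 : 0 < p) (hp1 : p ≠ 1) (n : ℕ) : pbinom p n 0 = 1 := by
  rw [pbinom, Nat.sub_zero, show pfact p 0 = 1 from Finset.prod_range_zero _, one_mul,
    div_self (pfact_ne_zero hp0 hp1 n)]

lemma pnum_sub_mul_pbinom_succ (hp0 : 0 < p) (hp1 : p ≠ 1) {m k : ℕ} (hk : k ≤ m) :
    pnum p (m + 1 - k) * pbinom p (m + 1) k = pnum p (m + 1) * pbinom p m k := by
  have hmk : m + 1 - k = m - k + 1 := by omega
  have := pfact_ne_zero hp0 hp1 k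
  have := pfact_ne_zero hp0 hp1 (m - k)
  have := pnum_ne_zero hp0 hp1 (m - k).succ_ne_zero
  rw [hmk, pbinom, pbinom, hmk, pfact_succ, pfact_succ]
  field_simp

end PNumbers

namespace IsDp

variable {p : ℝ} {D : Module.End ℂ ℂ[X]}

lemma apply_C_mul_X_pow (hD : IsDp p D) (a : ℂ) (n : ℕ) :
    D (C a * X ^ n) = C (a * pnum p n) * X ^ (n - 1) := by
  rw [linearMap_apply_C_mul, hD, ← mul_assoc, ← C_mul]

lemma apply_C (hD : IsDp p D) (a : ℂ) : D (C a) = 0 := by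
  simpa [pnum_zero] using hD.apply_C_mul_X_pow a 0

end IsDp

namespace IsTp

variable {p : ℝ} {δ : ℕ → ℂ} {T : Module.End ℂ ℂ[X]}

lemma apply_C (hp0 : 0 < p) (hp1 : p ≠ 1) (hδ0 : δ 0 = 1) (hT : IsTp p δ T) (a : ℂ) :
    T (C a) = C a := by
  have hT1 : T 1 = 1 := by simpa [pbinom_zero_right hp0 hp1, hδ0] using hT 0
  rw [← mul_one (C a), linearMap_apply_C_mul, hT1]

lemma coeff_apply_X_pow (hT : IsTp p δ T) (j i : ℕ) :
    (T (X ^ j)).coeff i = if i ≤ j then pbinom p j (j - i) * δ (j - i) else 0 := by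
  rw [hT j, finsetSum_coeff]
  simp only [coeff_C_mul, coeff_X_pow]
  split_ifs with hij
  · rw [Finset.sum_eq_single (j - i)] <;> grind
  · exact Finset.sum_eq_zero fun k hk => by grind

lemma coeff_apply_sub_self (hp0 : 0 < p) (hp1 : p ≠ 1) (hδ0 : δ 0 = 1) (hT : IsTp p δ T)
    {h : ℂ[X]} {m : ℕ} (hm : h.natDegree ≤ m + 1) :
    (T h - h).coeff m = pbinom p (m + 1) 1 * δ 1 * h.coeff (m + 1) := by
  have hTh : (T h).coeff m = ∑ j ∈ Finset.range (m + 2),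
      h.coeff j * if m ≤ j then pbinom p j (j - m) * δ (j - m) else 0 := by
    conv_lhs => rw [h.as_sum_range' (m + 2) (by omega)]
    simp only [map_sum, finsetSum_coeff, ← C_mul_X_pow_eq_monomial, linearMap_apply_C_mul,
      coeff_C_mul, hT.coeff_apply_X_pow]
  have hlow : ∀ j ∈ Finset.range m,
      h.coeff j * (if m ≤ j then pbinom p j (j - m) * δ (j - m) else 0) = 0 := by
    intro j hj
    rw [if_neg (by simpa using hj), mul_zero]
  rw [coeff_sub, hTh, Finset.sum_range_succ, Finset.sum_range_succ, Finset.sum_eq_zero hlow,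
    if_pos le_rfl, if_pos m.le_succ, Nat.sub_self, Nat.add_sub_cancel_left,
    pbinom_zero_right hp0 hp1, hδ0]
  ring

lemma eq_zero_of_apply_eq_self (hp0 : 0 < p) (hp1 : p ≠ 1) (hδ0 : δ 0 = 1) (hδ1 : δ 1 ≠ 0)
    (hT : IsTp p δ T) {g : ℂ[X]} (hg : T g = g) (hg0 : g.coeff 0 = 0) : g = 0 := by
  by_contra hne
  obtain ⟨m, hm⟩ : ∃ m, g.natDegree = m + 1 := by
    refine Nat.exists_eq_add_one.mpr (Nat.pos_of_ne_zero fun hd => hne ?_)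
    rw [eq_C_of_natDegree_eq_zero hd, hg0, map_zero]
  have htop := hT.coeff_apply_sub_self hp0 hp1 hδ0 (m := m) hm.le
  rw [hg, sub_self, coeff_zero, ← hm] at htop
  exact mul_ne_zero (mul_ne_zero (pbinom_ne_zero hp0 hp1 _ 1) hδ1)
    (leadingCoeff_ne_zero.mpr hne) htop.symm

end IsTp

lemma IsDp.apply_comm_isTp_X_pow {p : ℝ} (hp0 : 0 < p) (hp1 : p ≠ 1) {δ : ℕ → ℂ}
    (hδ0 : δ 0 = 1) {D T : Module.End ℂ ℂ[X]} (hD : IsDp p D) (hT : IsTp p δ T) (n : ℕ) :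
    D (T (X ^ n)) = T (D (X ^ n)) := by
  cases n with
  | zero => rw [pow_zero, ← C_1, hT.apply_C hp0 hp1 hδ0, hD.apply_C, map_zero]
  | succ m =>
    have htop : D (C (pbinom p (m + 1) (m + 1) * δ (m + 1)) * X ^ (m + 1 - (m + 1))) = 0 := by
      rw [Nat.sub_self, pow_zero, mul_one, hD.apply_C]
    rw [hT, map_sum, Finset.sum_range_succ, htop, add_zero, hD, Nat.add_sub_cancel,
      linearMap_apply_C_mul, hT, Finset.mul_sum]
    refine Finset.sum_congr rfl fun k hk => ?_
    have hkm : k ≤ m := Nat.lt_succ_iff.mp (Finset.mem_range.mp hk)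
    rw [hD.apply_C_mul_X_pow, show m + 1 - k - 1 = m - k by omega, ← mul_assoc, ← C_mul]
    congr 2
    linear_combination δ k * pnum_sub_mul_pbinom_succ hp0 hp1 hkm

lemma IsDp.apply_comm_isTp {p : ℝ} (hp0 : 0 < p) (hp1 : p ≠ 1) {δ : ℕ → ℂ}
    (hδ0 : δ 0 = 1) {D T : Module.End ℂ ℂ[X]} (hD : IsDp p D) (hT : IsTp p δ T) (f : ℂ[X]) :
    D (T f) = T (D f) := by
  have hcomp : D ∘ₗ T = T ∘ₗ D := lhom_ext' fun n => LinearMap.ext_ring <| by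
    simpa [monomial_one_right_eq_X_pow] using hD.apply_comm_isTp_X_pow hp0 hp1 hδ0 hT n
  exact LinearMap.congr_fun hcomp f

lemma IsPhi.delta_one_ne_zero {p : ℝ} (hp0 : 0 < p) (hp1 : p ≠ 1) {δ : ℕ → ℂ} (hδ0 : δ 0 = 1)
    {T : Module.End ℂ ℂ[X]} (hT : IsTp p δ T) {φ : ℕ → ℂ[X]} (hφ : IsPhi p T φ) : δ 1 ≠ 0 := by
  have h1 := congrArg (coeff · 0) (hφ.2.2 1 le_rfl)
  simp only [hT.coeff_apply_sub_self hp0 hp1 hδ0 (hφ.2.1 1 le_rfl).1.le, Nat.sub_self, pow_zero,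
    mul_one, coeff_C_zero] at h1
  intro hδ1
  rw [hδ1, mul_zero, zero_mul] at h1
  exact pnum_ne_zero hp0 hp1 one_ne_zero h1.symm

/-- For `n ≥ 2`, `D_p φ_n = (D_p φ_n)(0) + [n]_p φ_{n-1}`. -/
theorem Dp_phi_recurrence (p : ℝ) (hp0 : 0 < p) (hp1 : p ≠ 1)
    (δ : ℕ → ℂ) (hδ0 : δ 0 = 1)
    (D : Module.End ℂ (Polynomial ℂ)) (hD : IsDp p D)
    (T : Module.End ℂ (Polynomial ℂ)) (hT : IsTp p δ T)
    (φ : ℕ → Polynomial ℂ) (hφ : IsPhi p T φ) :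
    ∀ n : ℕ, 2 ≤ n →
      D (φ n) = Polynomial.C ((D (φ n)).coeff 0) + Polynomial.C (pnum p n) * φ (n - 1) := by
  intro n hn
  obtain ⟨m, rfl⟩ : ∃ m, n = m + 2 := ⟨n - 2, by omega⟩
  have hδ1 := hφ.delta_one_ne_zero hp0 hp1 hδ0 hT
  obtain ⟨-, hdeg, hrec⟩ := hφ
  set c := (D (φ (m + 2))).coeff 0
  set g := D (φ (m + 2)) - C c - C (pnum p (m + 2)) * φ (m + 1) with hg
  have hfix : T g - g = 0 := by
    have hTg : T g - g = D (T (φ (m + 2)) - φ (m + 2)) - (T (C c) - C c)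
        - C (pnum p (m + 2)) * (T (φ (m + 1)) - φ (m + 1)) := by
      simp only [hg, map_sub, linearMap_apply_C_mul, hD.apply_comm_isTp hp0 hp1 hδ0 hT]
      ring
    rw [hTg, hrec (m + 2) (by omega), hrec (m + 1) (by omega), hT.apply_C hp0 hp1 hδ0, sub_self,
      hD.apply_C_mul_X_pow, C_mul, show m + 2 - 1 = m + 1 by omega, Nat.add_sub_cancel]
    ring
  have hg0 : g.coeff 0 = 0 := by
    simp [hg, c, coeff_zero_eq_eval_zero, (hdeg (m + 1) (by omega)).2]
  have hg_zero := hT.eq_zero_of_apply_eq_self hp0 hp1 hδ0 hδ1 (sub_eq_zero.mp hfix) hg0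
  rw [show m + 2 - 1 = m + 1 by omega]
  linear_combination hg_zero

end
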